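/- arXiv:hep-th/0205113 — 6 statements merged into one kernel-verified Lean document; each statement's English description precedes it below -/
import Mathlib

section
/- Let A₁, A₂, A₃, A₄ be (m+n)×(m+n) odd block matrices (zero diagonal blocks with respect to the m,n block decomposition). Then the supertrace of the full symmetrization vanishes: str(Σ_{σ ∈ S₄} A_{σ(1)} A_{σ(2)} A_{σ(3)} A_{σ(4)}) = 0. -/
open Matrix

/-- The supertrace of a block matrix over `Fin m ⊕ Fin n`. -/
def str {m n : ℕ} {R : Type*} [CommRing R]
    (M : Matrix (Fin m ⊕ Fin n) (Fin m ⊕ Fin n) R) : R :=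
  Matrix.trace M.toBlocks₁₁ - Matrix.trace M.toBlocks₂₂

theorem str_sym4_odd {m n : ℕ} {R : Type*} [CommRing R]
    (A : Fin 4 → Matrix (Fin m ⊕ Fin n) (Fin m ⊕ Fin n) R)
    (hA : ∀ i, A i = Matrix.fromBlocks 0 (A i).toBlocks₁₂ (A i).toBlocks₂₁ 0) :
    str (∑ σ : Equiv.Perm (Fin 4), (List.ofFn fun i => A (σ i)).prod) = 0 := by
  set h : Equiv.Perm (Fin 4) → R := fun σ =>
    Matrix.trace ((A (σ 0)).toBlocks₁₂ * ((A (σ 1)).toBlocks₂₁ *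
      ((A (σ 2)).toBlocks₁₂ * (A (σ 3)).toBlocks₂₁))) with hh
  set c : Equiv.Perm (Fin 4) := finRotate 4 with hc
  have key : ∀ σ : Equiv.Perm (Fin 4),
      str ((List.ofFn fun i => A (σ i)).prod) = h σ - h (σ * c) := by
    intro σ
    rw [show (List.ofFn fun i => A (σ i)).prod
        = A (σ 0) * (A (σ 1) * (A (σ 2) * (A (σ 3) * 1))) from rfl, mul_one]
    rw [hA (σ 0), hA (σ 1), hA (σ 2), hA (σ 3)]
    have hcv : ∀ j : Fin 4, (σ * c) j = σ (c j) := fun j => rfl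
    simp only [str, hh, Matrix.fromBlocks_multiply, Matrix.zero_mul, Matrix.mul_zero,
      zero_add, add_zero, Matrix.toBlocks_fromBlocks₁₁, Matrix.toBlocks_fromBlocks₂₂,
      hcv, show c 0 = 1 from by decide, show c 1 = 2 from by decide,
      show c 2 = 3 from by decide, show c 3 = 0 from by decide, Matrix.mul_assoc]
    rw [Matrix.trace_mul_comm ((A (σ 0)).toBlocks₂₁)
      ((A (σ 1)).toBlocks₁₂ * ((A (σ 2)).toBlocks₂₁ * (A (σ 3)).toBlocks₁₂))]
    simp [Matrix.mul_assoc]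
  have hsum : str (∑ σ : Equiv.Perm (Fin 4), (List.ofFn fun i => A (σ i)).prod)
      = ∑ σ : Equiv.Perm (Fin 4), str ((List.ofFn fun i => A (σ i)).prod) := by
    simp only [str]
    rw [show (∑ σ : Equiv.Perm (Fin 4), (List.ofFn fun i => A (σ i)).prod).toBlocks₁₁
        = ∑ σ : Equiv.Perm (Fin 4), ((List.ofFn fun i => A (σ i)).prod).toBlocks₁₁ by
        ext i j; simp [Matrix.toBlocks₁₁, Matrix.sum_apply],
      show (∑ σ : Equiv.Perm (Fin 4), (List.ofFn fun i => A (σ i)).prod).toBlocks₂₂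
        = ∑ σ : Equiv.Perm (Fin 4), ((List.ofFn fun i => A (σ i)).prod).toBlocks₂₂ by
        ext i j; simp [Matrix.toBlocks₂₂, Matrix.sum_apply],
      Matrix.trace_sum, Matrix.trace_sum, Finset.sum_sub_distrib]
  rw [hsum]
  simp only [key]
  rw [Finset.sum_sub_distrib]
  have : ∑ σ : Equiv.Perm (Fin 4), h (σ * c) = ∑ σ : Equiv.Perm (Fin 4), h σ :=
    Fintype.sum_equiv (Equiv.mulRight c) _ _ (fun σ => rfl)
  rw [this, sub_self]
end

section
/- Let g₀ be a Lie algebra over a field F, let g₁ be a g₀-module with action ρ, let μ : g₁ → g₀ be a g₀-equivariant linear map satisfying ρ(μ(f₁)) f₂ + ρ(μ(f₂)) f₁ = 0 for all f₁, f₂ ∈ g₁, and let B : g₁ × g₁ → F be a symmetric bilinear form that is g₀-invariant, i.e. B(ρ(b) f₁, f₂) + B(f₁, ρ(b) f₂) = 0 for all b ∈ g₀. Define the symmetric trilinear bracket {f₁,f₂,f₃} = B(f₁,f₂) μ(f₃) + B(f₁,f₃) μ(f₂) + B(f₂,f₃) μ(f₁) ∈ g₀. Then the Jacobi identity J₄ holds: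 for all f₁, f₂, f₃, f₄ ∈ g₁, Σ_{i=1}^{4} ρ({f₁,…,f̂ᵢ,…,f₄}) fᵢ = 0, where f̂ᵢ means omitting fᵢ. -/
theorem J4_induced_order_three
    {F : Type*} [Field F] {g₀ g₁ : Type*}
    [LieRing g₀] [LieAlgebra F g₀]
    [AddCommGroup g₁] [Module F g₁]
    [LieRingModule g₀ g₁] [LieModule F g₀ g₁]
    (μ : g₁ →ₗ[F] g₀)
    (hμ_equiv : ∀ (b : g₀) (f : g₁), μ ⁅b, f⁆ = ⁅b, μ f⁆)
    (hμ : ∀ f₁ f₂ : g₁, ⁅μ f₁, f₂⁆ + ⁅μ f₂, f₁⁆ = 0)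
    (B : g₁ →ₗ[F] g₁ →ₗ[F] F)
    (hB_symm : ∀ f₁ f₂ : g₁, B f₁ f₂ = B f₂ f₁)
    (hB_inv : ∀ (b : g₀) (f₁ f₂ : g₁), B ⁅b, f₁⁆ f₂ + B f₁ ⁅b, f₂⁆ = 0)
    (t : g₁ → g₁ → g₁ → g₀)
    (ht : ∀ f₁ f₂ f₃ : g₁,
      t f₁ f₂ f₃ = B f₁ f₂ • μ f₃ + B f₁ f₃ • μ f₂ + B f₂ f₃ • μ f₁) :
    ∀ f₁ f₂ f₃ f₄ : g₁,
      ⁅t f₂ f₃ f₄, f₁⁆ + ⁅t f₁ f₃ f₄, f₂⁆ + ⁅t f₁ f₂ f₄, f₃⁆ + ⁅t f₁ f₂ f₃, f₄⁆ = (0 : g₁) := by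
  intro f₁ f₂ f₃ f₄
  have h : ∀ a b : g₁, ⁅μ b, a⁆ = -⁅μ a, b⁆ := fun a b =>
    eq_neg_of_add_eq_zero_right (hμ a b)
  rw [ht, ht, ht, ht]
  simp only [add_lie, smul_lie, h f₁ f₂, h f₁ f₃, h f₁ f₄, h f₂ f₃, h f₂ f₄, h f₃ f₄,
    hB_symm f₂ f₁, hB_symm f₃ f₁, hB_symm f₄ f₁, hB_symm f₃ f₂, hB_symm f₄ f₂, hB_symm f₄ f₃,
    smul_neg]
  abel
end

section
/- Let g be a Lie algebra over a field and B : g × g → F a symmetric invariant bilinear form (B([x,y],z) = B(x,[y,z]) for all x,y,z, e.g. the Killing form). Define {x,y,z} = B(x,y) z + B(x,z) y + B(y,z) x. Then for all x₁, x₂, x₃, x₄ ∈ g: Σ_{i=1}^{4} [ {x₁,…,x̂ᵢ,…,x₄}, xᵢ ] = 0. -/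
theorem J4_adjoint_invariant_form
    {F : Type*} [Field F] {g : Type*} [LieRing g] [LieAlgebra F g]
    (B : g →ₗ[F] g →ₗ[F] F)
    (hB_symm : ∀ x y : g, B x y = B y x)
    (hB_inv : ∀ x y z : g, B ⁅x, y⁆ z + B y ⁅x, z⁆ = 0)
    (t : g → g → g → g)
    (ht : ∀ x y z : g, t x y z = B x y • z + B x z • y + B y z • x) :
    ∀ x₁ x₂ x₃ x₄ : g,
      ⁅t x₂ x₃ x₄, x₁⁆ + ⁅t x₁ x₃ x₄, x₂⁆ + ⁅t x₁ x₂ x₄, x₃⁆ + ⁅t x₁ x₂ x₃, x₄⁆ = 0 := by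
  intro x₁ x₂ x₃ x₄
  simp only [ht, add_lie, smul_lie]
  rw [← lie_skew x₁ x₄, ← lie_skew x₁ x₃, ← lie_skew x₁ x₂,
      ← lie_skew x₂ x₄, ← lie_skew x₂ x₃, ← lie_skew x₃ x₄]
  module
end

section
/- Let g₀ be a Lie algebra over a field F acting on a vector space g₁ via ρ, let μ₁ : g₁ × g₁ → g₀ be a symmetric bilinear g₀-equivariant map satisfying the super-Jacobi identity ρ(μ₁(f₁,f₂)) f₃ + ρ(μ₁(f₂,f₃)) f₁ + ρ(μ₁(f₃,f₁)) f₂ = 0 for all f₁,f₂,f₃ ∈ g₁ (i.e. g₀ ⊕ g₁ is a Lie superalgebra), and let B : g₁ × g₁ → F be a symmetric g₀-invariant bilinear form. Define the symmetric quadrilinear bracket {f₁,f₂,f₃,f₄} = B(f₁,f₂)μ₁(f₃,f₄) + B(f₃,f₄)μ₁(f₁,f₂) + B(f₁,f₃)μ₁(f₂,f₄) + B(f₂,f₄)μ₁(f₁,f₃) + B(f₁,f₄)μ₁(f₂,f₃) + B(f₂,f₃)μ₁(f₁,f₄). Then for all f₁,…,f₅ ∈ g₁: Σ_{i=1}^{5}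 ρ({f₁,…,f̂ᵢ,…,f₅}) fᵢ = 0. -/
theorem J4_induced_order_four
    {F : Type*} [Field F] {g₀ g₁ : Type*}
    [LieRing g₀] [LieAlgebra F g₀]
    [AddCommGroup g₁] [Module F g₁]
    [LieRingModule g₀ g₁] [LieModule F g₀ g₁]
    (μ₁ : g₁ →ₗ[F] g₁ →ₗ[F] g₀)
    (hμ_symm : ∀ f₁ f₂ : g₁, μ₁ f₁ f₂ = μ₁ f₂ f₁)
    (hμ_equiv : ∀ (b : g₀) (f₁ f₂ : g₁),
      μ₁ ⁅b, f₁⁆ f₂ + μ₁ f₁ ⁅b, f₂⁆ = ⁅b, μ₁ f₁ f₂⁆)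
    (hμ_jac : ∀ f₁ f₂ f₃ : g₁,
      ⁅μ₁ f₁ f₂, f₃⁆ + ⁅μ₁ f₂ f₃, f₁⁆ + ⁅μ₁ f₃ f₁, f₂⁆ = 0)
    (B : g₁ →ₗ[F] g₁ →ₗ[F] F)
    (hB_symm : ∀ f₁ f₂ : g₁, B f₁ f₂ = B f₂ f₁)
    (hB_inv : ∀ (b : g₀) (f₁ f₂ : g₁), B ⁅b, f₁⁆ f₂ + B f₁ ⁅b, f₂⁆ = 0)
    (t : g₁ → g₁ → g₁ → g₁ → g₀)
    (ht : ∀ f₁ f₂ f₃ f₄ : g₁,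
      t f₁ f₂ f₃ f₄ =
        B f₁ f₂ • μ₁ f₃ f₄ + B f₃ f₄ • μ₁ f₁ f₂ +
        B f₁ f₃ • μ₁ f₂ f₄ + B f₂ f₄ • μ₁ f₁ f₃ +
        B f₁ f₄ • μ₁ f₂ f₃ + B f₂ f₃ • μ₁ f₁ f₄) :
    ∀ f₁ f₂ f₃ f₄ f₅ : g₁,
      ⁅t f₂ f₃ f₄ f₅, f₁⁆ + ⁅t f₁ f₃ f₄ f₅, f₂⁆ + ⁅t f₁ f₂ f₄ f₅, f₃⁆ +
        ⁅t f₁ f₂ f₃ f₅, f₄⁆ + ⁅t f₁ f₂ f₃ f₄, f₅⁆ = (0 : g₁) := by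
  intro f₁ f₂ f₃ f₄ f₅
  have key : ∀ a b c d e : g₁,
      B a b • ⁅μ₁ c d, e⁆ + B a b • ⁅μ₁ d e, c⁆ + B a b • ⁅μ₁ c e, d⁆ = 0 := by
    intro a b c d e
    rw [hμ_symm c e, ← smul_add, ← smul_add, hμ_jac, smul_zero]
  have total :
      (B f₁ f₂ • ⁅μ₁ f₃ f₄, f₅⁆ + B f₁ f₂ • ⁅μ₁ f₄ f₅, f₃⁆ + B f₁ f₂ • ⁅μ₁ f₃ f₅, f₄⁆) +
      (B f₁ f₃ • ⁅μ₁ f₂ f₄, f₅⁆ + B f₁ f₃ • ⁅μ₁ f₄ f₅, f₂⁆ + B f₁ f₃ • ⁅μ₁ f₂ f₅, f₄⁆) +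
      (B f₁ f₄ • ⁅μ₁ f₂ f₃, f₅⁆ + B f₁ f₄ • ⁅μ₁ f₃ f₅, f₂⁆ + B f₁ f₄ • ⁅μ₁ f₂ f₅, f₃⁆) +
      (B f₁ f₅ • ⁅μ₁ f₂ f₃, f₄⁆ + B f₁ f₅ • ⁅μ₁ f₃ f₄, f₂⁆ + B f₁ f₅ • ⁅μ₁ f₂ f₄, f₃⁆) +
      (B f₂ f₃ • ⁅μ₁ f₁ f₄, f₅⁆ + B f₂ f₃ • ⁅μ₁ f₄ f₅, f₁⁆ + B f₂ f₃ • ⁅μ₁ f₁ f₅, f₄⁆) +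
      (B f₂ f₄ • ⁅μ₁ f₁ f₃, f₅⁆ + B f₂ f₄ • ⁅μ₁ f₃ f₅, f₁⁆ + B f₂ f₄ • ⁅μ₁ f₁ f₅, f₃⁆) +
      (B f₂ f₅ • ⁅μ₁ f₁ f₃, f₄⁆ + B f₂ f₅ • ⁅μ₁ f₃ f₄, f₁⁆ + B f₂ f₅ • ⁅μ₁ f₁ f₄, f₃⁆) +
      (B f₃ f₄ • ⁅μ₁ f₁ f₂, f₅⁆ + B f₃ f₄ • ⁅μ₁ f₂ f₅, f₁⁆ + B f₃ f₄ • ⁅μ₁ f₁ f₅, f₂⁆) +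
      (B f₃ f₅ • ⁅μ₁ f₁ f₂, f₄⁆ + B f₃ f₅ • ⁅μ₁ f₂ f₄, f₁⁆ + B f₃ f₅ • ⁅μ₁ f₁ f₄, f₂⁆) +
      (B f₄ f₅ • ⁅μ₁ f₁ f₂, f₃⁆ + B f₄ f₅ • ⁅μ₁ f₂ f₃, f₁⁆ + B f₄ f₅ • ⁅μ₁ f₁ f₃, f₂⁆) = 0 := by
    rw [key, key, key, key, key, key, key, key, key, key]
    simp
  simp only [ht, add_lie, smul_lie]
  rw [← total]
  abel
end

section
/- Let g = g₊ ⊕ g₋ be a Z₂-graded Lie algebra and μ : g → g a linear map such that μ(g₋) ⊆ g₊, μ is g₊-equivariant (μ([x, y]) = [x, μ(y)] for all x ∈ g₊, y ∈ g), and μ is injective on [g₊, g₋]. Then for all f₁, f₂ ∈ g₋: [μ(f₁), f₂] + [μ(f₂), f₁] = 0. -/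
theorem graded_one_lie_from_graded_lie
    {F : Type*} [Field F] {g : Type*} [LieRing g] [LieAlgebra F g]
    (p m : Submodule F g)
    (hpp : ∀ x ∈ p, ∀ y ∈ p, ⁅x, y⁆ ∈ p)
    (hpm : ∀ x ∈ p, ∀ f ∈ m, ⁅x, f⁆ ∈ m)
    (hmm : ∀ f₁ ∈ m, ∀ f₂ ∈ m, ⁅f₁, f₂⁆ ∈ p)
    (hdecomp : p ⊔ m = ⊤) (hdisj : p ⊓ m = ⊥)
    (μ : g →ₗ[F] g)
    (hμodd : ∀ f ∈ m, μ f ∈ p)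
    (hμ_equiv : ∀ x ∈ p, ∀ y : g, μ ⁅x, y⁆ = ⁅x, μ y⁆)
    (hμ_inj : Set.InjOn μ
      (Submodule.span F {z : g | ∃ x ∈ p, ∃ f ∈ m, z = ⁅x, f⁆} : Set g)) :
    ∀ f₁ ∈ m, ∀ f₂ ∈ m, ⁅μ f₁, f₂⁆ + ⁅μ f₂, f₁⁆ = 0 := by
  intro f₁ hf₁ f₂ hf₂
  have h1 : ⁅μ f₁, f₂⁆ ∈ Submodule.span F {z : g | ∃ x ∈ p, ∃ f ∈ m, z = ⁅x, f⁆} :=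
    Submodule.subset_span ⟨μ f₁, hμodd f₁ hf₁, f₂, hf₂, rfl⟩
  have h2 : ⁅μ f₂, f₁⁆ ∈ Submodule.span F {z : g | ∃ x ∈ p, ∃ f ∈ m, z = ⁅x, f⁆} :=
    Submodule.subset_span ⟨μ f₂, hμodd f₂ hf₂, f₁, hf₁, rfl⟩
  have hsum := add_mem h1 h2
  have hμ0 : μ (⁅μ f₁, f₂⁆ + ⁅μ f₂, f₁⁆) = μ 0 := by
    rw [map_add, hμ_equiv _ (hμodd f₁ hf₁), hμ_equiv _ (hμodd f₂ hf₂),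
      ← lie_skew (μ f₁) (μ f₂), map_zero]
    abel
  exact hμ_inj hsum (Submodule.zero_mem _) hμ0
end

section
/- Let A₁, …, A_{2k} be (m+n)×(m+n) odd block matrices (zero diagonal blocks with respect to the m,n decomposition), where 2k ≥ 2. Then the supertrace of the full symmetrization vanishes: str(Σ_{σ ∈ S_{2k}} A_{σ(1)} ⋯ A_{σ(2k)}) = 0, where str([[P,Q],[R,S]]) = Tr(P) - Tr(S). -/
/-!
Right multiplication by the cyclic shift `finRotate` moves the first factor `A (σ 0)` of the word
`A (σ 0) ⋯ A (σ (2k-1))` to the end, and for an odd block matrix `X` and any `Y` we have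
`str (Y * X) = -str (X * Y)`. Since `2k` is even the shift is an odd permutation, so
`σ ↦ σ * shift ^ (±1)`, the sign chosen by `sign σ`, is a fixed-point-free involution of the
symmetric group that negates the summand. The terms therefore cancel in pairs, with no division
by `2`.
-/

open Matrix

theorem Fintype.sum_eq_zero_of_apply_mul_eq_neg {G M : Type*} [Group G] [Fintype G]
    [AddCommGroup M] (χ : G →* ℤˣ) {r : G} (hr : χ r = -1) {f : G → M}
    (hf : ∀ g, f (g * r) = -f g) : ∑ g, f g = 0 := by
  have hr_ne_one : r ≠ 1 := by rintro rfl; simp at hr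
  have hf_inv : ∀ g, f (g * r⁻¹) = -f g := fun g => by
    rw [← neg_neg (f (g * r⁻¹)), ← hf, inv_mul_cancel_right]
  refine Finset.sum_ninvolution (fun g => if χ g = 1 then g * r else g * r⁻¹) (fun g => ?_)
    (fun g _ => ?_) (fun _ => Finset.mem_univ _) (fun g => ?_)
  · split_ifs <;> simp [hf, hf_inv]
  · split_ifs <;> simp [hr_ne_one]
  · rcases Int.units_eq_one_or (χ g) with h | h <;> simp [h, hr]

section Supertrace

variable {m n : ℕ} {R : Type*} [CommRing R]

theorem str_mul_comm_of_odd {X : Matrix (Fin m ⊕ Fin n) (Fin m ⊕ Fin n) R}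
    (hX : X = fromBlocks 0 X.toBlocks₁₂ X.toBlocks₂₁ 0)
    (Y : Matrix (Fin m ⊕ Fin n) (Fin m ⊕ Fin n) R) :
    str (Y * X) = -str (X * Y) := by
  rw [hX, ← fromBlocks_toBlocks Y]
  simp only [str, fromBlocks_multiply, toBlocks_fromBlocks₁₁, toBlocks_fromBlocks₂₂, zero_mul,
    mul_zero, add_zero, zero_add, trace_mul_comm X.toBlocks₁₂, trace_mul_comm X.toBlocks₂₁]
  ring

theorem str_prod_ofFn_comp_finRotate {N : ℕ}
    (f : Fin (N + 1) → Matrix (Fin m ⊕ Fin n) (Fin m ⊕ Fin n) R)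
    (h0 : f 0 = fromBlocks 0 (f 0).toBlocks₁₂ (f 0).toBlocks₂₁ 0) :
    str (List.ofFn fun i => f (finRotate (N + 1) i)).prod = -str (List.ofFn f).prod := by
  rw [List.ofFn_succ', List.ofFn_succ, List.prod_concat, List.prod_cons, finRotate_last]
  simp only [finRotate_apply, Fin.coeSucc_eq_succ]
  exact str_mul_comm_of_odd h0 _

theorem str_sum {ι : Type*} (s : Finset ι)
    (M : ι → Matrix (Fin m ⊕ Fin n) (Fin m ⊕ Fin n) R) :
    str (∑ i ∈ s, M i) = ∑ i ∈ s, str (M i) := by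
  simp only [str, trace, diag, toBlocks₁₁, toBlocks₂₂, of_apply, Matrix.sum_apply,
    Finset.sum_sub_distrib]
  congr 1 <;> exact Finset.sum_comm

theorem str_sum_perm_prod_eq_zero {N : ℕ} (hN : Even N) (hN0 : N ≠ 0)
    (A : Fin N → Matrix (Fin m ⊕ Fin n) (Fin m ⊕ Fin n) R)
    (hA : ∀ i, A i = fromBlocks 0 (A i).toBlocks₁₂ (A i).toBlocks₂₁ 0) :
    str (∑ σ : Equiv.Perm (Fin N), (List.ofFn fun i => A (σ i)).prod) = 0 := by
  obtain ⟨N, rfl⟩ := Nat.exists_eq_add_one_of_ne_zero hN0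
  rw [str_sum]
  have hodd : Odd N := Nat.not_even_iff_odd.mp (Nat.even_add_one.mp hN)
  refine Fintype.sum_eq_zero_of_apply_mul_eq_neg Equiv.Perm.sign (r := finRotate (N + 1)) ?_
    fun σ => ?_
  · rw [sign_finRotate, Nat.add_sub_cancel, hodd.neg_one_pow]
  · exact str_prod_ofFn_comp_finRotate (fun i => A (σ i)) (hA _)

end Supertrace

theorem str_sym_even_odd {m n k : ℕ} {R : Type*} [CommRing R] (hk : 1 ≤ k)
    (A : Fin (2 * k) → Matrix (Fin m ⊕ Fin n) (Fin m ⊕ Fin n) R)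
    (hA : ∀ i, A i = Matrix.fromBlocks 0 (A i).toBlocks₁₂ (A i).toBlocks₂₁ 0) :
    str (∑ σ : Equiv.Perm (Fin (2 * k)), (List.ofFn fun i => A (σ i)).prod) = 0 :=
  str_sum_perm_prod_eq_zero (even_two_mul k) (by omega) A hA
end
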